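/- Let W = δ(U(π,u,yu)) ∈ T_I(G) satisfy ζ(W) = δ(U(π̂,u,ŷu)) ≠ W, where the ζ-move swaps terminal subpaths of π_{u_j}, π_{u_{j'}} at the central vertex of G_{J_p}, and let b be the number of paths of π which enter G_{J_p} between π_{u_j} and π_{u_{j'}} and also leave G_{J_p} between these two paths. Then incross(ζ(W)) = incross(W) + b if the triple (π_{u_j},π_{u_{j'}},p) is a crossing, and incross(ζ(W)) = incross(W) − b otherwise. -/

import Mathlib

/- Common combinatorial setup: star networks, covering path families,
   crossing/noncrossing statistics, and the base ring ℤ[q^{1/2},q^{-1/2}]. -/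

open Equiv Finset
open scoped Classical

noncomputable section

/-- The ring `ℤ[q^{1/2}, q^{-1/2}]`, realized as Laurent polynomials in the
variable `q^{1/2}` (so the exponent-`k` monomial is `q^{k/2}`). -/
abbrev R2 : Type := LaurentPolynomial ℤ

/-- `q^{k/2}`. -/
def Qp (k : ℤ) : R2 := LaurentPolynomial.T k

/-- `q`. -/
def qq : R2 := LaurentPolynomial.T 2

/-- Coxeter length of a permutation, i.e. its inversion number. -/
def len {n : ℕ} (w : Perm (Fin n)) : ℕ :=
  ((univ : Finset (Fin n × Fin n)).filter fun p => p.1 < p.2 ∧ w p.2 < w p.1).card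

/-- Membership in the interval `J = [a,b] ⊆ [n]`. -/
def memJ {n : ℕ} (J : Fin n × Fin n) (i : Fin n) : Prop := J.1 ≤ i ∧ i ≤ J.2

/-- Membership in the subgroup `S_J ≤ S_n` generated by the adjacent
transpositions `s_a, …, s_{b-1}` of the interval `J = [a,b]`; equivalently,
the permutations supported on `[a,b]`. -/
def inSJ {n : ℕ} (J : Fin n × Fin n) (w : Perm (Fin n)) : Prop :=
  ∀ i, w i ≠ i → memJ J i

/-- A path family covering the star network `G_{J_1} ∘ ⋯ ∘ G_{J_m}` is
faithfully encoded by the permutation of the wire positions realized at each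
simple-star factor: at factor `p` the paths whose current positions lie in
`J_p` pass through the central vertex and are permuted arbitrarily within
`J_p` (every entering and leaving edge being used exactly once), while all
other paths use their unique horizontal edge.  Thus a covering family is a
sequence `vs` of permutations with `vs p` supported on `J_p`. -/
def IsPathFamily {n m : ℕ} (Js : Fin m → Fin n × Fin n)
    (vs : Fin m → Perm (Fin n)) : Prop :=
  ∀ p, inSJ (Js p) (vs p)

/-- The position of the path starting at source `i` just before factor `k`
(as a permutation of sources). -/
def posAt {n m : ℕ} (vs : Fin m → Perm (Fin n)) (k : ℕ) : Perm (Fin n) :=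
  (((List.ofFn vs).take k).reverse).prod

/-- The type of a covering path family: the path starting at source `i`
terminates at sink `typeOf vs i`. -/
def typeOf {n m : ℕ} (vs : Fin m → Perm (Fin n)) : Perm (Fin n) := posAt vs m

/-- The path from source `i` passes through the central vertex of the factor
`G_{J_p}`. -/
def centeredAt {n m : ℕ} (Js : Fin m → Fin n × Fin n) (vs : Fin m → Perm (Fin n))
    (p : Fin m) (i : Fin n) : Prop :=
  (Js p).1 < (Js p).2 ∧ memJ (Js p) (posAt vs p i)

/-- The paths from sources `i` and `j` both pass through the central vertex of
the factor `G_{J_p}`. -/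
def meetAt {n m : ℕ} (Js : Fin m → Fin n × Fin n) (vs : Fin m → Perm (Fin n))
    (p : Fin m) (i j : Fin n) : Prop :=
  centeredAt Js vs p i ∧ centeredAt Js vs p j

/-- The triple `(π_i, π_j, p)` is a crossing: the two paths intersect at the
central vertex of `G_{J_p}` and cross there. -/
def crossingAt {n m : ℕ} (Js : Fin m → Fin n × Fin n) (vs : Fin m → Perm (Fin n))
    (p : Fin m) (i j : Fin n) : Prop :=
  meetAt Js vs p i j ∧
    ¬ ((posAt vs p i < posAt vs p j) ↔ (posAt vs (p.1 + 1) i < posAt vs (p.1 + 1) j))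

/-- `cross(π)`: the number of crossings of the path family. -/
def crossNum {n m : ℕ} (Js : Fin m → Fin n × Fin n)
    (vs : Fin m → Perm (Fin n)) : ℕ :=
  ((univ : Finset ((Fin n × Fin n) × Fin m)).filter fun x =>
    x.1.1 < x.1.2 ∧ crossingAt Js vs x.2 x.1.1 x.1.2).card

/-- The triple `(π_i, π_j, p)` is a noncrossing with `π_i` entering and
leaving the central vertex of `G_{J_p}` below `π_j`. -/
def noncrossBelow {n m : ℕ} (Js : Fin m → Fin n × Fin n) (vs : Fin m → Perm (Fin n))
    (p : Fin m) (i j : Fin n) : Prop :=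
  meetAt Js vs p i j ∧
    posAt vs p i < posAt vs p j ∧ posAt vs (p.1 + 1) i < posAt vs (p.1 + 1) j

/-- `incross(U)` for a tableau `U` containing the paths of `π`, recorded via
the function `col` assigning to each path (index) the index of the column of
`U` containing it: the number of inverted noncrossings, i.e. noncrossings
`(π_i, π_j, p)` (with `π_i` below `π_j`) such that `π_j` lies in an earlier
column of `U` than `π_i`. -/
def incrossNum {n m : ℕ} (Js : Fin m → Fin n × Fin n) (vs : Fin m → Perm (Fin n))
    (col : Fin n → ℕ) : ℕ :=
  ((univ : Finset ((Fin n × Fin n) × Fin m)).filter fun x =>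
    noncrossBelow Js vs x.2 x.1.1 x.1.2 ∧ col x.1.2 < col x.1.1).card

/-- The number of crossings of the two paths `π_i, π_j` strictly before the
factor `G_{J_p}`. -/
def crossBefore {n m : ℕ} (Js : Fin m → Fin n × Fin n) (vs : Fin m → Perm (Fin n))
    (p : Fin m) (i j : Fin n) : ℕ :=
  ((univ : Finset (Fin m)).filter fun k => k < p ∧ crossingAt Js vs k i j).card

/-- The triple `(π_i, π_j, p)` is defective: the paths meet at the central
vertex of `G_{J_p}` having previously crossed an odd number of times. -/
def defectiveAt {n m : ℕ} (Js : Fin m → Fin n × Fin n) (vs : Fin m → Perm (Fin n))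
    (p : Fin m) (i j : Fin n) : Prop :=
  meetAt Js vs p i j ∧ Odd (crossBefore Js vs p i j)

/-- `dfct(π)`: the number of defective triples of the path family. -/
def dfctNum {n m : ℕ} (Js : Fin m → Fin n × Fin n)
    (vs : Fin m → Perm (Fin n)) : ℕ :=
  ((univ : Finset ((Fin n × Fin n) × Fin m)).filter fun x =>
    x.1.1 < x.1.2 ∧ defectiveAt Js vs x.2 x.1.1 x.1.2).card

/-- `cdncross(W)`: the number of defective noncrossings between pairs of
paths appearing in the same column of the tableau recorded by `col`. -/
def cdncrossNum {n m : ℕ} (Js : Fin m → Fin n × Fin n) (vs : Fin m → Perm (Fin n))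
    (col : Fin n → ℕ) : ℕ :=
  ((univ : Finset ((Fin n × Fin n) × Fin m)).filter fun x =>
    x.1.1 < x.1.2 ∧ defectiveAt Js vs x.2 x.1.1 x.1.2 ∧
      ¬ crossingAt Js vs x.2 x.1.1 x.1.2 ∧ col x.1.1 = col x.1.2).card

/-- The adjacent transposition `s_{i+1}` (0-indexed: swaps positions `i` and
`i+1`). -/
def swp {n : ℕ} (i : ℕ) (h : i + 1 < n) : Perm (Fin n) :=
  Equiv.swap ⟨i, by omega⟩ ⟨i + 1, h⟩

end
/- Young subgroups, minimal coset representatives, the induced sign character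
`ε_q^λ`, and column-strict tableaux (encoded by column assignments). -/

noncomputable section
open Equiv Finset
open scoped Classical

/-- Given a composition `lam = (λ_1, …, λ_r)` of `n`, the index of the block
`B_k = [λ_1 + ⋯ + λ_{k-1} + 1, λ_1 + ⋯ + λ_k]` containing the (0-indexed)
position `i`. -/
def blockIdx (lam : List ℕ) (i : ℕ) : ℕ :=
  ((List.range lam.length).filter fun k => (lam.take (k + 1)).sum ≤ i).length

/-- Membership in the Young subgroup `S_λ`: the permutations preserving each
block `B_k`. -/
def inYoung {n : ℕ} (lam : List ℕ) (w : Perm (Fin n)) : Prop :=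
  ∀ i : Fin n, blockIdx lam ((w i : Fin n) : ℕ) = blockIdx lam (i : ℕ)

/-- `u` is the minimum-length representative of its coset `S_λ u`
(in the paper's conventions, of the left coset `u S_λ` used in the
factorization `w = w_- w^*`): `u` has no inversions whose two values lie in a
common block. -/
def isMinRep {n : ℕ} (lam : List ℕ) (u : Perm (Fin n)) : Prop :=
  ∀ i j : Fin n, i < j →
    blockIdx lam ((u i : Fin n) : ℕ) = blockIdx lam ((u j : Fin n) : ℕ) →
      u i < u j

/-- The induced sign character `ε_q^λ = sgn ↑_{H_λ(q)}^{H_n(q)}`, computed in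
the natural basis: `H_n(q)` is a free right `H_λ(q)`-module with basis
`{T_u}` indexed by the minimum-length coset representatives, every basis
element factors as `T_{τ∘u} = T_u T_τ` with `τ ∈ S_λ`, the sign character
sends `T_τ` to `(-1)^{ℓ(τ)}`, and the character of the induced module
`H_n(q) ⊗_{H_λ(q)} sgn` is obtained by summing the diagonal coefficients. -/
def epsChar {n : ℕ} {H : Type*} [Ring H] [Algebra R2 H] (lam : List ℕ)
    (T : Module.Basis (Perm (Fin n)) R2 H) (h : H) : R2 :=
  ∑ u ∈ (univ : Finset (Perm (Fin n))).filter (fun u => isMinRep lam u),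
    ∑ τ ∈ (univ : Finset (Perm (Fin n))).filter (fun τ => inYoung lam τ),
      (-1 : R2) ^ len τ * T.repr (h * T u) (τ * u)

/-- A column-strict tableau of shape `λᵗ` (whose columns therefore have
lengths `λ_1, …, λ_r`) filled with the paths of a covering path family of
type `typeOf vs`, encoded by the assignment `f` sending each path to the
index of its column: column `k` must have `λ_k` entries, and since the
entries of a column are arranged bottom-to-top in increasing order of source
index, column-strictness says that the sink indices of the paths in a common
column also increase with the source indices. -/
def IsColStrictAssign {n m : ℕ} (lam : List ℕ) (vs : Fin m → Perm (Fin n))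
    (f : Fin n → Fin lam.length) : Prop :=
  (∀ k : Fin lam.length,
      ((univ : Finset (Fin n)).filter fun i => f i = k).card = lam.get k) ∧
    ∀ i j : Fin n, f i = f j → i < j → typeOf vs i < typeOf vs j

end
/- The data of the involution ζ on the tableau set T_I.  An ordered set
partition `I = (I_1, …, I_r)` of `[n]` of type `λ` is encoded by the
permutation `u = u(I)` (increasing on each block `B_k`, with `I_k = u(B_k)`);
an element `U(π, u, yu)` of `U_I(G)` is encoded by the covering path family
`π` (with `typeOf π = u ∘ y ∘ u⁻¹` for some `y ∈ S_λ`); its image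
`W = δ(U(π,u,yu)) ∈ T_I(G)` is the tableau of shape `λᵗ` whose `k`-th column
contains the paths with sources in `I_k`, so the column of the path `i` in
`W` is `colOf lam u i`. -/

noncomputable section
open Equiv Finset
open scoped Classical

/-- The column of the path `π_i` in the tableau `δ(U(π,u,yu)) ∈ T_I`. -/
def colOf {n : ℕ} (lam : List ℕ) (u : Perm (Fin n)) (i : Fin n) : ℕ :=
  blockIdx lam ((u⁻¹ i : Fin n) : ℕ)

/-- Column `c` of the tableau `δ(U(π,u,yu))` is column-strict: its sink
indices increase (bottom to top) together with its source indices. -/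
def colStrictCol {n m : ℕ} (lam : List ℕ) (u : Perm (Fin n))
    (vs : Fin m → Perm (Fin n)) (c : ℕ) : Prop :=
  ∀ i i' : Fin n, colOf lam u i = c → colOf lam u i' = c → i < i' →
    typeOf vs i < typeOf vs i'

/-- The path family obtained by swapping the terminal subpaths of the paths
from sources `i` and `i'`, beginning at the central vertex of the factor
`G_{J_p}`: the permutation realized at factor `p` is composed with the
transposition of the two leaving positions. -/
def zetaSwap {n m : ℕ} (vs : Fin m → Perm (Fin n)) (p : Fin m)
    (i i' : Fin n) : Fin m → Perm (Fin n) :=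
  fun k => if k = p then
    Equiv.swap (posAt vs (p.1 + 1) i) (posAt vs (p.1 + 1) i') * vs p
  else vs k

/-- The data entering the definition of the involution `ζ = ζ_I` at a
non-column-strict tableau `W = δ(U(π,u,yu)) ∈ T_I(G)`:
`tc` is the greatest index of a non-column-strict column of `W`; `p` is the
greatest index such that at least two paths of column `tc` pass through the
interior vertex of `G_{J_p}`; and `j, j'` are the two positions in block `tc`
whose paths `π_{u_j}, π_{u_{j'}}` (through that vertex) have the
right-to-left lexicographically greatest pair of sink indices, normalized so
that the sink of `π_{u_{j'}}` is the larger.  Then `ζ(W)` is obtained from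
`W` by replacing `π` with `zetaSwap vs p (u j) (u j')`. -/
structure ZetaData {n m : ℕ} (Js : Fin m → Fin n × Fin n) (lam : List ℕ)
    (u : Perm (Fin n)) (vs : Fin m → Perm (Fin n)) : Type where
  tc : ℕ
  p : Fin m
  j : Fin n
  j' : Fin n
  htc : ¬ colStrictCol lam u vs tc
  htcMax : ∀ c : ℕ, tc < c → colStrictCol lam u vs c
  hpMeet : ∃ i i' : Fin n, i ≠ i' ∧ colOf lam u i = tc ∧ colOf lam u i' = tc ∧
    centeredAt Js vs p i ∧ centeredAt Js vs p i'
  hpMax : ∀ p' : Fin m, p < p' →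
    ¬ ∃ i i' : Fin n, i ≠ i' ∧ colOf lam u i = tc ∧ colOf lam u i' = tc ∧
      centeredAt Js vs p' i ∧ centeredAt Js vs p' i'
  hne : j ≠ j'
  hjcol : blockIdx lam (j : ℕ) = tc
  hjcol' : blockIdx lam (j' : ℕ) = tc
  hjcent : centeredAt Js vs p (u j)
  hjcent' : centeredAt Js vs p (u j')
  hord : typeOf vs (u j) < typeOf vs (u j')
  hmax : ∀ k k' : Fin n, k ≠ k' →
    blockIdx lam (k : ℕ) = tc → blockIdx lam (k' : ℕ) = tc →
    centeredAt Js vs p (u k) → centeredAt Js vs p (u k') →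
    typeOf vs (u k) < typeOf vs (u k') →
    (typeOf vs (u k') < typeOf vs (u j') ∨
      (k' = j' ∧ typeOf vs (u k) ≤ typeOf vs (u j)))

/-- The number `b` of paths of `π` which enter the factor `G_{J_p}` between
the paths from sources `i` and `i'`, and which also leave `G_{J_p}` between
the same two paths. -/
def betweenNum {n m : ℕ} (Js : Fin m → Fin n × Fin n) (vs : Fin m → Perm (Fin n))
    (p : Fin m) (i i' : Fin n) : ℕ :=
  ((univ : Finset (Fin n)).filter fun x =>
    x ≠ i ∧ x ≠ i' ∧ centeredAt Js vs p x ∧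
      (min (posAt vs p i) (posAt vs p i') < posAt vs p x ∧
        posAt vs p x < max (posAt vs p i) (posAt vs p i')) ∧
      (min (posAt vs (p.1 + 1) i) (posAt vs (p.1 + 1) i') < posAt vs (p.1 + 1) x ∧
        posAt vs (p.1 + 1) x < max (posAt vs (p.1 + 1) i) (posAt vs (p.1 + 1) i'))).card

end
noncomputable section
open Equiv Finset
open scoped Classical

/-! Swapping the exits of `π_a` and `π_{a'}` (`a = u_j`, `a' = u_{j'}`) at `G_{J_p}` leaves
all positions before `p` unchanged and relabels `a ↔ a'` after `p`; as `a` and `a'` lie in one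
column, the inverted noncrossings at every other factor are in bijection. At `p` only the pairs
`{x, a}`, `{x, a'}` change, each `x` contributing `±1` exactly when it enters and leaves between
the two paths (`+` iff they cross). Paths in the column of `a` contribute nothing, and by the
choice of `j, j'` none of them leaves between `a` and `a'`: after `p` no two paths of that column
meet, so their exit order at `p` is their sink order. -/

variable {n m : ℕ}

theorem posAt_succ (vs : Fin m → Perm (Fin n)) (k : Fin m) :
    posAt vs (k + 1) = vs k * posAt vs k := by
  simp [posAt, List.take_add_one]

section zetaSwap

variable (vs : Fin m → Perm (Fin n)) (p : Fin m) (a a' : Fin n)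

theorem posAt_zetaSwap_of_le {k : ℕ} (hk : k ≤ p) :
    posAt (zetaSwap vs p a a') k = posAt vs k := by
  induction k with
  | zero => rfl
  | succ k ih =>
    have hkp : (⟨k, by omega⟩ : Fin m) ≠ p := Fin.ne_of_val_ne (by simp; omega)
    rw [posAt_succ _ ⟨k, by omega⟩, posAt_succ vs ⟨k, by omega⟩, ih (by omega)]
    simp [zetaSwap, hkp]

theorem posAt_zetaSwap_of_lt {k : ℕ} (hpk : p < k) (hkm : k ≤ m) :
    posAt (zetaSwap vs p a a') k = posAt vs k * swap a a' := by
  induction k, Nat.succ_le_of_lt hpk using Nat.le_induction with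
  | base =>
    rw [posAt_succ, posAt_succ, posAt_zetaSwap_of_le vs p a a' le_rfl, mul_swap_eq_swap_mul]
    simp [zetaSwap, mul_assoc, posAt_succ]
  | succ k hk ih =>
    have hkp : (⟨k, by omega⟩ : Fin m) ≠ p := Fin.ne_of_val_ne (by simp; omega)
    rw [posAt_succ _ ⟨k, by omega⟩, posAt_succ vs ⟨k, by omega⟩, ih (by omega) (by omega)]
    simp [zetaSwap, hkp, mul_assoc]

end zetaSwap

section inSJ

variable {J : Fin n × Fin n} {w : Perm (Fin n)}

theorem inSJ.apply_eq_of_not_memJ (h : inSJ J w) {i : Fin n} (hi : ¬ memJ J i) : w i = i :=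
  not_imp_comm.mp (h i) hi

theorem inSJ.memJ_apply (h : inSJ J w) {i : Fin n} (hi : memJ J i) : memJ J (w i) := by
  by_cases hfix : w i = i
  · rwa [hfix]
  · exact h (w i) fun hw => hfix (w.injective hw)

theorem inSJ.eq_one_of_not_lt (h : inSJ J w) (hJ : ¬ J.1 < J.2) : w = 1 := by
  refine Equiv.ext fun i => by_contra fun hi => ?_
  rw [Perm.one_apply] at hi
  have hwi := h.memJ_apply (h i hi)
  have hii := h i hi
  simp only [memJ, Fin.le_def, Fin.lt_def, not_lt] at hwi hii hJ
  exact hi (Fin.ext (by omega))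

theorem inSJ.apply_lt_apply_iff (h : inSJ J w) {s t : Fin n}
    (hst : ¬ ((J.1 < J.2 ∧ memJ J s) ∧ (J.1 < J.2 ∧ memJ J t))) :
    w s < w t ↔ s < t := by
  by_cases hJ : J.1 < J.2
  swap
  · rw [h.eq_one_of_not_lt hJ, Perm.one_apply, Perm.one_apply]
  by_cases hs : memJ J s <;> by_cases ht : memJ J t
  · exact absurd ⟨⟨hJ, hs⟩, hJ, ht⟩ hst
  · have hws := h.memJ_apply hs
    rw [h.apply_eq_of_not_memJ ht]
    simp only [memJ, Fin.le_def, Fin.lt_def, not_and_or, not_le] at hs ht hws ⊢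
    omega
  · have hwt := h.memJ_apply ht
    rw [h.apply_eq_of_not_memJ hs]
    simp only [memJ, Fin.le_def, Fin.lt_def, not_and_or, not_le] at hs ht hwt ⊢
    omega
  · rw [h.apply_eq_of_not_memJ hs, h.apply_eq_of_not_memJ ht]

end inSJ

theorem IsPathFamily.posAt_lt_posAt_iff {Js : Fin m → Fin n × Fin n}
    {vs : Fin m → Perm (Fin n)} (hvs : IsPathFamily Js vs) {x x' : Fin n} {i k : ℕ}
    (hik : i ≤ k) (hkm : k ≤ m)
    (hmeet : ∀ q : Fin m, i ≤ q → (q : ℕ) < k → ¬ meetAt Js vs q x x') :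
    posAt vs k x < posAt vs k x' ↔ posAt vs i x < posAt vs i x' := by
  induction k, hik using Nat.le_induction with
  | base => rfl
  | succ k hik ih =>
    rw [← ih (by omega) fun q hiq hqk => hmeet q hiq (by omega), posAt_succ vs ⟨k, by omega⟩]
    exact (hvs _).apply_lt_apply_iff (hmeet ⟨k, by omega⟩ hik (by simp))

section incross

variable (Js : Fin m → Fin n × Fin n) (col : Fin n → ℕ)

def incrossAt (vs : Fin m → Perm (Fin n)) (q : Fin m) : ℕ :=
  #{pr : Fin n × Fin n | noncrossBelow Js vs q pr.1 pr.2 ∧ col pr.2 < col pr.1}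

theorem incrossNum_eq_sum_incrossAt (vs : Fin m → Perm (Fin n)) :
    incrossNum Js vs col = ∑ q, incrossAt Js col vs q := by
  simp only [incrossNum, incrossAt, card_filter]
  exact Fintype.sum_prod_type_right _

theorem noncrossBelow_iff_of_posAt_eq_mul {vs ws : Fin m → Perm (Fin n)} {q : Fin m}
    {σ : Perm (Fin n)} (h₀ : posAt ws q = posAt vs q * σ)
    (h₁ : posAt ws (q + 1) = posAt vs (q + 1) * σ) (i j : Fin n) :
    noncrossBelow Js ws q i j ↔ noncrossBelow Js vs q (σ i) (σ j) := by
  simp only [noncrossBelow, meetAt, centeredAt, h₀, h₁, Perm.mul_apply]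

theorem incrossAt_eq_of_posAt_eq_mul {vs ws : Fin m → Perm (Fin n)} {q : Fin m}
    {σ : Perm (Fin n)} (h₀ : posAt ws q = posAt vs q * σ)
    (h₁ : posAt ws (q + 1) = posAt vs (q + 1) * σ) (hσ : ∀ i, col (σ i) = col i) :
    incrossAt Js col ws q = incrossAt Js col vs q := by
  refine card_equiv (σ.prodCongr σ) fun pr => ?_
  simp [noncrossBelow_iff_of_posAt_eq_mul Js h₀ h₁, hσ]

theorem incrossAt_zetaSwap_of_ne (vs : Fin m → Perm (Fin n)) {p q : Fin m} {a a' : Fin n}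
    (hcol : col a = col a') (hqp : q ≠ p) :
    incrossAt Js col (zetaSwap vs p a a') q = incrossAt Js col vs q := by
  rcases lt_or_gt_of_ne hqp with hq | hq
  · refine incrossAt_eq_of_posAt_eq_mul (σ := 1) Js col ?_ ?_ fun _ => rfl <;>
      rw [mul_one, posAt_zetaSwap_of_le] <;> omega
  · refine incrossAt_eq_of_posAt_eq_mul (σ := swap a a') Js col
      (posAt_zetaSwap_of_lt vs p a a' hq q.isLt.le)
      (posAt_zetaSwap_of_lt vs p a a' (Nat.lt_succ_of_lt hq) q.isLt) fun i => ?_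
    rcases eq_or_ne i a with rfl | hia
    · simp [hcol]
    rcases eq_or_ne i a' with rfl | hia'
    · simp [hcol]
    · rw [swap_apply_of_ne_of_ne hia hia']

end incross

theorem Fintype.sum_eq_add_sum_compl_pair {α M : Type*} [Fintype α] [DecidableEq α]
    [AddCommMonoid M] {a a' : α} (h : a ≠ a') (g : α → M) :
    ∑ x, g x = g a + g a' + ∑ x ∈ {a, a'}ᶜ, g x := by
  rw [← sum_add_sum_compl {a, a'} g, sum_pair h]

theorem Fintype.sum_sum_eq_add_sum_compl_pair {α M : Type*} [Fintype α] [DecidableEq α]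
    [AddCommMonoid M] {a a' : α} (h : a ≠ a') (F : α → α → M) :
    ∑ x, ∑ y, F x y = (F a a + F a a' + F a' a + F a' a') +
      ∑ x ∈ {a, a'}ᶜ, ((F x a + F a x) + (F x a' + F a' x)) +
      ∑ x ∈ {a, a'}ᶜ, ∑ y ∈ {a, a'}ᶜ, F x y := by
  simp only [Fintype.sum_eq_add_sum_compl_pair h, sum_add_distrib]
  abel

/-- Inverted noncrossings between two paths through one central vertex: `x` (column `cx`,
entering at `ex`, leaving at `fx`) and `z` (column `c`, entering at `ez`, leaving at `fz`). -/
def invCount {α : Type*} [LinearOrder α] (cx c : ℕ) (ex fx ez fz : α) : ℤ :=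
  (if ex < ez ∧ fx < fz ∧ c < cx then 1 else 0) +
    (if ez < ex ∧ fz < fx ∧ cx < c then 1 else 0)

/-- With `s e = [ex < e]`, `t f = [fx < f]` (say `c < cx`), the change is
`(s ea - s ea') * (t fa' - t fa)`, and `t fa' - t fa = [fa < fx < fa']`. -/
theorem invCount_swap_exits {α : Type*} [LinearOrder α] {cx c : ℕ} {ex fx ea ea' fa fa' : α}
    (hfa : fa < fa') (hxa : ex ≠ ea) (hxa' : ex ≠ ea')
    (hfx : fx ≠ fa) (hfx' : fx ≠ fa') (hc : cx = c → ¬ (fa < fx ∧ fx < fa')) :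
    invCount cx c ex fx ea fa' + invCount cx c ex fx ea' fa =
      invCount cx c ex fx ea fa + invCount cx c ex fx ea' fa' +
        (if ea' < ea then 1 else -1) *
          (if (min ea ea' < ex ∧ ex < max ea ea') ∧ (min fa fa' < fx ∧ fx < max fa fa')
            then 1 else 0) := by
  rw [min_eq_left hfa.le, max_eq_right hfa.le]
  rcases eq_or_ne cx c with rfl | hne
  · simp [invCount, hc rfl]
  rcases lt_or_gt_of_ne hxa with h1 | h1 <;> rcases lt_or_gt_of_ne hxa' with h2 | h2 <;>
    rcases lt_or_gt_of_ne hfx with h3 | h3 <;> rcases lt_or_gt_of_ne hfx' with h4 | h4 <;>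
    rcases lt_or_gt_of_ne hne with h5 | h5 <;>
    simp [invCount, h1, h2, h3, h4, h5, h1.not_gt, h2.not_gt, h3.not_gt, h4.not_gt, h5.not_gt] <;>
    (try split_ifs) <;> first | order | norm_num

section incrossPair

variable (Js : Fin m → Fin n × Fin n) (col : Fin n → ℕ)

def incrossPair (vs : Fin m → Perm (Fin n)) (q : Fin m) (x z : Fin n) : ℤ :=
  (if noncrossBelow Js vs q x z ∧ col z < col x then 1 else 0) +
    (if noncrossBelow Js vs q z x ∧ col x < col z then 1 else 0)

theorem incrossPair_eq_invCount (vs : Fin m → Perm (Fin n)) (q : Fin m) {x z : Fin n}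
    (hz : centeredAt Js vs q z) :
    incrossPair Js col vs q x z = if centeredAt Js vs q x then
      invCount (col x) (col z) (posAt vs q x) (posAt vs (q + 1) x)
        (posAt vs q z) (posAt vs (q + 1) z) else 0 := by
  by_cases hx : centeredAt Js vs q x <;>
    simp [incrossPair, invCount, noncrossBelow, meetAt, hx, hz, and_assoc]

def PassesBetween (vs : Fin m → Perm (Fin n)) (p : Fin m) (a a' x : Fin n) : Prop :=
  centeredAt Js vs p x ∧
    (min (posAt vs p a) (posAt vs p a') < posAt vs p x ∧
      posAt vs p x < max (posAt vs p a) (posAt vs p a')) ∧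
    (min (posAt vs (p + 1) a) (posAt vs (p + 1) a') < posAt vs (p + 1) x ∧
      posAt vs (p + 1) x < max (posAt vs (p + 1) a) (posAt vs (p + 1) a'))

theorem betweenNum_eq_sum (vs : Fin m → Perm (Fin n)) (p : Fin m) (a a' : Fin n) :
    (betweenNum Js vs p a a' : ℤ) =
      ∑ x ∈ {a, a'}ᶜ, if PassesBetween Js vs p a a' x then 1 else 0 := by
  rw [betweenNum, ← sum_boole, ← sum_filter, ← sum_filter]
  congr 1
  ext x
  simp [PassesBetween, and_assoc]

theorem incrossPair_zetaSwap_add (vs : Fin m → Perm (Fin n)) (p : Fin m) {a a' x : Fin n}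
    (ha : centeredAt Js vs p a) (ha' : centeredAt Js vs p a')
    (hcol : col a = col a') (hexit : posAt vs (p + 1) a < posAt vs (p + 1) a')
    (hnot_between : col x = col a → centeredAt Js vs p x →
      ¬ (posAt vs (p + 1) a < posAt vs (p + 1) x ∧ posAt vs (p + 1) x < posAt vs (p + 1) a'))
    (hxa : x ≠ a) (hxa' : x ≠ a') :
    incrossPair Js col (zetaSwap vs p a a') p x a +
        incrossPair Js col (zetaSwap vs p a a') p x a' =
      incrossPair Js col vs p x a + incrossPair Js col vs p x a' +
        (if posAt vs p a' < posAt vs p a then 1 else -1) *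
          (if PassesBetween Js vs p a a' x then 1 else 0) := by
  have hE := posAt_zetaSwap_of_le vs p a a' le_rfl
  have hF := posAt_zetaSwap_of_lt vs p a a' (Nat.lt_succ_self p) p.isLt
  have hcent : centeredAt Js (zetaSwap vs p a a') p = centeredAt Js vs p := by
    ext; simp [centeredAt, hE]
  rw [incrossPair_eq_invCount Js col _ p (by rwa [hcent]),
    incrossPair_eq_invCount Js col _ p (by rwa [hcent]), incrossPair_eq_invCount Js col vs p ha,
    incrossPair_eq_invCount Js col vs p ha', hcent, hE, hF]
  by_cases hx : centeredAt Js vs p x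
  · simp only [hx, if_true, PassesBetween, true_and, Perm.mul_apply, swap_apply_left,
      swap_apply_right, swap_apply_of_ne_of_ne hxa hxa', hcol]
    exact invCount_swap_exits hexit ((posAt vs p).injective.ne hxa) ((posAt vs p).injective.ne hxa')
      ((posAt vs (p + 1)).injective.ne hxa) ((posAt vs (p + 1)).injective.ne hxa')
      fun h => hnot_between (h.trans hcol.symm) hx
  · simp [hx, PassesBetween]

theorem incrossAt_eq_sum_incrossPair_add (vs : Fin m → Perm (Fin n)) (q : Fin m) {a a' : Fin n}
    (hne : a ≠ a') (hcol : col a = col a') :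
    (incrossAt Js col vs q : ℤ) =
      ∑ x ∈ {a, a'}ᶜ, (incrossPair Js col vs q x a + incrossPair Js col vs q x a') +
        ∑ x ∈ {a, a'}ᶜ, ∑ y ∈ {a, a'}ᶜ,
          if noncrossBelow Js vs q x y ∧ col y < col x then 1 else 0 := by
  have hsum : (incrossAt Js col vs q : ℤ) =
      ∑ x, ∑ y, if noncrossBelow Js vs q x y ∧ col y < col x then 1 else 0 := by
    simp only [incrossAt, card_filter, Nat.cast_sum, Nat.cast_ite, Nat.cast_one, Nat.cast_zero,
      Fintype.sum_prod_type]
  have hcorner : ∀ x y, col x = col y →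
      (if noncrossBelow Js vs q x y ∧ col y < col x then (1 : ℤ) else 0) = 0 :=
    fun x y h => if_neg fun h' => (h ▸ h'.2).false
  rw [hsum, Fintype.sum_sum_eq_add_sum_compl_pair hne, hcorner a a rfl, hcorner a a' hcol,
    hcorner a' a hcol.symm, hcorner a' a' rfl, add_zero, add_zero, add_zero, zero_add]
  rfl

theorem incrossAt_zetaSwap_self (vs : Fin m → Perm (Fin n)) (p : Fin m) {a a' : Fin n}
    (ha : centeredAt Js vs p a) (ha' : centeredAt Js vs p a') (hne : a ≠ a')
    (hcol : col a = col a') (hexit : posAt vs (p + 1) a < posAt vs (p + 1) a')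
    (hnot_between : ∀ x, col x = col a → centeredAt Js vs p x →
      ¬ (posAt vs (p + 1) a < posAt vs (p + 1) x ∧ posAt vs (p + 1) x < posAt vs (p + 1) a')) :
    (incrossAt Js col (zetaSwap vs p a a') p : ℤ) = incrossAt Js col vs p +
      (if posAt vs p a' < posAt vs p a then 1 else -1) * betweenNum Js vs p a a' := by
  have hE := posAt_zetaSwap_of_le vs p a a' le_rfl
  have hF := posAt_zetaSwap_of_lt vs p a a' (Nat.lt_succ_self p) p.isLt
  have hinner : ∀ x ∈ ({a, a'}ᶜ : Finset (Fin n)), ∀ y ∈ ({a, a'}ᶜ : Finset (Fin n)),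
      noncrossBelow Js (zetaSwap vs p a a') p x y ↔ noncrossBelow Js vs p x y := by
    intro x hx y hy
    simp only [mem_compl, mem_insert, mem_singleton, not_or] at hx hy
    simp [noncrossBelow, meetAt, centeredAt, hE, hF, swap_apply_of_ne_of_ne, hx, hy]
  have hside : ∀ x ∈ ({a, a'}ᶜ : Finset (Fin n)),
      incrossPair Js col (zetaSwap vs p a a') p x a +
          incrossPair Js col (zetaSwap vs p a a') p x a' =
        incrossPair Js col vs p x a + incrossPair Js col vs p x a' +
          (if posAt vs p a' < posAt vs p a then 1 else -1) *
            (if PassesBetween Js vs p a a' x then 1 else 0) := by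
    intro x hx
    obtain ⟨hxa, hxa'⟩ : x ≠ a ∧ x ≠ a' := by simpa [not_or] using hx
    exact incrossPair_zetaSwap_add Js col vs p ha ha' hcol hexit (hnot_between x) hxa hxa'
  rw [incrossAt_eq_sum_incrossPair_add Js col _ p hne hcol,
    incrossAt_eq_sum_incrossPair_add Js col vs p hne hcol, betweenNum_eq_sum, mul_sum,
    sum_congr rfl hside, sum_add_distrib,
    sum_congr rfl fun x hx => sum_congr rfl fun y hy => by rw [hinner x hx y hy]]
  abel

end incrossPair

theorem incrossNum_zetaSwap (Js : Fin m → Fin n × Fin n) (col : Fin n → ℕ)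
    (vs : Fin m → Perm (Fin n)) (p : Fin m) {a a' : Fin n}
    (ha : centeredAt Js vs p a) (ha' : centeredAt Js vs p a') (hne : a ≠ a')
    (hcol : col a = col a') (hexit : posAt vs (p + 1) a < posAt vs (p + 1) a')
    (hnot_between : ∀ x, col x = col a → centeredAt Js vs p x →
      ¬ (posAt vs (p + 1) a < posAt vs (p + 1) x ∧ posAt vs (p + 1) x < posAt vs (p + 1) a')) :
    (incrossNum Js (zetaSwap vs p a a') col : ℤ) = incrossNum Js vs col +
      (if crossingAt Js vs p a a' then 1 else -1) * betweenNum Js vs p a a' := by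
  have hcross : crossingAt Js vs p a a' ↔ posAt vs p a' < posAt vs p a := by
    have hE : posAt vs p a' ≠ posAt vs p a := (posAt vs p).injective.ne hne.symm
    simp only [crossingAt, meetAt, ha, ha', hexit, iff_true, true_and, not_lt,
      le_iff_lt_or_eq, or_iff_left hE]
  rw [incrossNum_eq_sum_incrossAt, incrossNum_eq_sum_incrossAt,
    ← add_sum_erase _ _ (mem_univ p), ← add_sum_erase _ _ (mem_univ p),
    sum_congr rfl fun q hq => incrossAt_zetaSwap_of_ne Js col vs hcol (ne_of_mem_erase hq)]
  push_cast
  rw [incrossAt_zetaSwap_self Js col vs p ha ha' hne hcol hexit hnot_between]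
  simp only [hcross]
  ring

theorem colOf_apply_self (lam : List ℕ) (u : Perm (Fin n)) (j : Fin n) :
    colOf lam u (u j) = blockIdx lam j := by
  simp [colOf]

namespace ZetaData

variable {Js : Fin m → Fin n × Fin n} {lam : List ℕ} {u : Perm (Fin n)}
  {vs : Fin m → Perm (Fin n)} (Z : ZetaData Js lam u vs)

theorem colOf_j : colOf lam u (u Z.j) = Z.tc :=
  (colOf_apply_self ..).trans Z.hjcol

theorem colOf_j' : colOf lam u (u Z.j') = Z.tc :=
  (colOf_apply_self ..).trans Z.hjcol'

theorem typeOf_lt_typeOf_iff (hvs : IsPathFamily Js vs) {x x' : Fin n}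
    (hx : colOf lam u x = Z.tc) (hx' : colOf lam u x' = Z.tc) (hne : x ≠ x') :
    typeOf vs x < typeOf vs x' ↔ posAt vs (Z.p + 1) x < posAt vs (Z.p + 1) x' :=
  hvs.posAt_lt_posAt_iff Z.p.isLt le_rfl fun q hpq _ hmeet =>
    Z.hpMax q (Fin.lt_def.mpr hpq) ⟨x, x', hne, hx, hx', hmeet⟩

theorem posAt_succ_lt_posAt_succ (hvs : IsPathFamily Js vs) :
    posAt vs (Z.p + 1) (u Z.j) < posAt vs (Z.p + 1) (u Z.j') :=
  (Z.typeOf_lt_typeOf_iff hvs Z.colOf_j Z.colOf_j' (u.injective.ne Z.hne)).mp Z.hord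

theorem not_between (hvs : IsPathFamily Js vs) {x : Fin n}
    (hx : colOf lam u x = colOf lam u (u Z.j)) (hcent : centeredAt Js vs Z.p x) :
    ¬ (posAt vs (Z.p + 1) (u Z.j) < posAt vs (Z.p + 1) x ∧
      posAt vs (Z.p + 1) x < posAt vs (Z.p + 1) (u Z.j')) := by
  rintro ⟨h, h'⟩
  obtain ⟨k, rfl⟩ := u.surjective x
  rw [Z.colOf_j] at hx
  have hkj : k ≠ Z.j := by rintro rfl; exact h.false
  have hkj' : k ≠ Z.j' := by rintro rfl; exact h'.false
  have hsink := (Z.typeOf_lt_typeOf_iff hvs Z.colOf_j hx (u.injective.ne hkj.symm)).mpr h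
  have hsink' := (Z.typeOf_lt_typeOf_iff hvs hx Z.colOf_j' (u.injective.ne hkj')).mpr h'
  rw [colOf_apply_self] at hx
  rcases Z.hmax k Z.j' hkj' hx Z.hjcol' hcent Z.hjcent' hsink' with h'' | ⟨-, h''⟩
  · exact h''.false
  · exact h''.not_gt hsink

end ZetaData

theorem zeta_move_incross_change_general
    {n m : ℕ} (Js : Fin m → Fin n × Fin n)
    (lam : List ℕ)
    (u : Perm (Fin n))
    (vs : Fin m → Perm (Fin n)) (hvs : IsPathFamily Js vs)
    (Z : ZetaData Js lam u vs) :
    (crossingAt Js vs Z.p (u Z.j) (u Z.j') →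
      incrossNum Js (zetaSwap vs Z.p (u Z.j) (u Z.j')) (colOf lam u) =
        incrossNum Js vs (colOf lam u) +
          betweenNum Js vs Z.p (u Z.j) (u Z.j')) ∧
    (¬ crossingAt Js vs Z.p (u Z.j) (u Z.j') →
      incrossNum Js (zetaSwap vs Z.p (u Z.j) (u Z.j')) (colOf lam u) +
          betweenNum Js vs Z.p (u Z.j) (u Z.j') =
        incrossNum Js vs (colOf lam u)) := by
  have key := incrossNum_zetaSwap Js (colOf lam u) vs Z.p Z.hjcent Z.hjcent'
    (u.injective.ne Z.hne) (Z.colOf_j.trans Z.colOf_j'.symm)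
    (Z.posAt_succ_lt_posAt_succ hvs) fun x hx => Z.not_between hvs hx
  constructor <;> intro h <;> simp only [h, if_true, if_false] at key <;> omega

/-- Lemma 5.3, identity (5.7) / `l:statids`,
`eq:incrossid`.  Let `W = δ(U(π,u,yu)) ∈ T_I(G)` with
`ζ(W) = δ(U(π̂,u,ŷu)) ≠ W`, where the `ζ`-move (recorded by `Z`) swaps the
terminal subpaths of `π_{u_j}, π_{u_{j'}}` at the central vertex of
`G_{J_p}`, and let `b` be the number of paths of `π` which enter `G_{J_p}`
between `π_{u_j}` and `π_{u_{j'}}` and also leave `G_{J_p}` between these two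
paths.  Then `incross(ζ(W)) = incross(W) + b` if `(π_{u_j}, π_{u_{j'}}, p)`
is a crossing, and `incross(ζ(W)) = incross(W) − b` otherwise (the columns of
both tableaux being given by `colOf lam u`). -/
theorem zeta_move_incross_change
    {n m : ℕ} (Js : Fin m → Fin n × Fin n) (hJs : ∀ p, (Js p).1 ≤ (Js p).2)
    (lam : List ℕ) (hsum : lam.sum = n) (hpos : ∀ x ∈ lam, 0 < x)
    (hsort : lam.Pairwise (fun a b => b ≤ a))
    (u : Perm (Fin n))
    (hu : ∀ i j : Fin n, i < j →
      blockIdx lam (i : ℕ) = blockIdx lam (j : ℕ) → u i < u j)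
    (vs : Fin m → Perm (Fin n)) (hvs : IsPathFamily Js vs)
    (y : Perm (Fin n)) (hy : inYoung lam y)
    (hty : typeOf vs = u * y * u⁻¹)
    (Z : ZetaData Js lam u vs) :
    (crossingAt Js vs Z.p (u Z.j) (u Z.j') →
      incrossNum Js (zetaSwap vs Z.p (u Z.j) (u Z.j')) (colOf lam u) =
        incrossNum Js vs (colOf lam u) +
          betweenNum Js vs Z.p (u Z.j) (u Z.j')) ∧
    (¬ crossingAt Js vs Z.p (u Z.j) (u Z.j') →
      incrossNum Js (zetaSwap vs Z.p (u Z.j) (u Z.j')) (colOf lam u) +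
          betweenNum Js vs Z.p (u Z.j) (u Z.j') =
        incrossNum Js vs (colOf lam u)) :=
  zeta_move_incross_change_general Js lam u vs hvs Z

end
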